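/- arXiv:1510.08722 — 3 statements merged into one kernel-verified Lean document; each statement's English description precedes it below -/
import Mathlib

section
/- In an ordered assembly, if y is positive (i.e. e(y) ≤ y), then y ≤ e(x) if and only if e(x) + y = e(x). -/
structure Assembly (A : Type*) where
  add : A → A → A
  e : A → A
  neg : A → A
  add_assoc : ∀ x y z, add x (add y z) = add (add x y) z
  add_comm : ∀ x y, add x y = add y x
  add_e : ∀ x, add x (e x) = x
  e_max : ∀ x f, add x f = x → add (e x) f = e x
  add_neg : ∀ x, add x (neg x) = e x
  e_neg : ∀ x, e (neg x) = e x
  e_add : ∀ x y, e (add x y) = e x ∨ e (add x y) = e y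

structure OrderedAssembly (A : Type*) extends Assembly A where
  le : A → A → Prop
  le_refl : ∀ x, le x x
  le_antisymm : ∀ x y, le x y → le y x → x = y
  le_trans : ∀ x y z, le x y → le y z → le x z
  le_total : ∀ x y, le x y ∨ le y x
  add_le_add : ∀ x y z, le x y → le (add x z) (add y z)
  le_e : ∀ x y, add y (e x) = e x → le y (e x) ∧ le (neg y) (e x)

/-!
Magnitudes are exactly the idempotents, and the sum of two magnitudes is again one of them, so
`e y ≤ e x` forces `e x + e y = e x`. For positive `y ≤ e x`, adding `e x` to `e y ≤ y ≤ e x`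
squeezes `e x + y` between `e x + e y = e x` and `e x + e x = e x`.
-/

namespace Assembly

variable {A : Type*} (S : Assembly A)

instance : Std.Associative S.add := ⟨fun x y z => (S.add_assoc x y z).symm⟩

instance : Std.Commutative S.add := ⟨S.add_comm⟩

lemma e_add_self (x : A) : S.add (S.e x) (S.e x) = S.e x :=
  S.e_max x (S.e x) (S.add_e x)

lemma e_eq_of_add_self {z : A} (hz : S.add z z = z) : S.e z = z := by
  calc S.e z = S.add (S.e z) z := (S.e_max z z hz).symm
    _ = z := by rw [S.add_comm, S.add_e]

lemma e_e (x : A) : S.e (S.e x) = S.e x :=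
  S.e_eq_of_add_self (S.e_add_self x)

lemma e_add_e_eq_or (x y : A) :
    S.add (S.e x) (S.e y) = S.e x ∨ S.add (S.e x) (S.e y) = S.e y := by
  have hidem : S.add (S.add (S.e x) (S.e y)) (S.add (S.e x) (S.e y)) =
      S.add (S.e x) (S.e y) := by
    calc _ = S.add (S.add (S.e x) (S.e x)) (S.add (S.e y) (S.e y)) := by ac_rfl
      _ = _ := by rw [S.e_add_self, S.e_add_self]
  have h := S.e_add (S.e x) (S.e y)
  rwa [S.e_eq_of_add_self hidem, S.e_e, S.e_e] at h

end Assembly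

namespace OrderedAssembly

variable {A : Type*} (S : OrderedAssembly A)

lemma e_add_e_eq_left_of_le {x y : A} (h : S.le (S.e y) (S.e x)) :
    S.add (S.e x) (S.e y) = S.e x := by
  rcases S.e_add_e_eq_or x y with hx | hy
  · exact hx
  · have hxy : S.e x = S.e y := S.le_antisymm _ _ (S.le_e y (S.e x) hy).1 h
    rw [hy, hxy]

end OrderedAssembly

theorem stmt5 {A : Type*} (S : OrderedAssembly A) (x y : A)
    (hy : S.le (S.e y) y) :
    S.le y (S.e x) ↔ S.add (S.e x) y = S.e x := by
  constructor
  · intro h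
    have hupper : S.le (S.add (S.e x) y) (S.e x) := by
      simpa only [S.add_comm y, S.e_add_self] using S.add_le_add y (S.e x) (S.e x) h
    have hlower : S.le (S.e x) (S.add (S.e x) y) := by
      have hmag := S.e_add_e_eq_left_of_le (S.le_trans _ _ _ hy h)
      simpa only [S.add_comm _ (S.e x), hmag] using S.add_le_add (S.e y) y (S.e x) hy
    exact S.le_antisymm _ _ hupper hlower
  · intro h
    rw [S.add_comm] at h
    exact (S.le_e x y h).1
end

section
/- In a solid, the product of two positive elements is positive: if e(x) ≤ x and e(y) ≤ y then e(x·y) ≤ x·y. -/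
structure Solid (A : Type*) extends OrderedAssembly A where
  mul : A → A → A
  u : A → A
  inv : A → A
  mul_assoc : ∀ x y z, mul x (mul y z) = mul (mul x y) z
  mul_comm : ∀ x y, mul x y = mul y x
  mul_u : ∀ x, x ≠ e x → mul x (u x) = x
  u_max : ∀ x, x ≠ e x → ∀ v, mul x v = x → mul (u x) v = u x
  mul_inv : ∀ x, x ≠ e x → mul x (inv x) = u x
  u_inv : ∀ x, x ≠ e x → u (inv x) = u x
  u_mul : ∀ x y, x ≠ e x → y ≠ e y →
    u (mul x y) = u x ∨ u (mul x y) = u y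
  compat_mul : ∀ x y z, le (e x) x → e x ≠ x → le y z → le (mul x y) (mul x z)
  amplification : ∀ x y z, le (e y) y → le y z → le (mul (e x) y) (mul (e x) z)
  escala : ∀ x y, ∃ z, mul (e x) y = e z
  e_mul : ∀ x y, e (mul x y) = add (mul (e x) y) (mul (e y) x)
  e_u : ∀ x, x ≠ e x → e (u x) = mul (e x) (inv x)
  dist : ∀ x y z, add (mul x y) (mul x z) =
    add (add (mul x (add y z)) (mul (e x) y)) (mul (e x) z)
  neg_mul : ∀ x y, neg (mul x y) = mul (neg x) y
  zero : A
  add_zero : ∀ x, add x zero = x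
  one : A
  one_mul : ∀ x, mul one x = x
  M : A
  e_add_M : ∀ x, add (e x) M = M
  exists_neutrix : ∃ x, e x ≠ zero ∧ e x ≠ M
  decomp : ∀ x, ∃ a, x = add a (e x) ∧ e a = zero
  dense : ∀ x y, x = e x → y = e y → le x y → x ≠ y →
    ∃ z, z ≠ e z ∧ le x z ∧ x ≠ z ∧ le z y ∧ z ≠ y

/-!
By the Leibniz rule, `e(xy) = e(x)y + e(y)x`, and `e(y)x` is a magnitude, hence absorbed by `xy`
(which already absorbs `e(xy)`). So it suffices that `e(x)y ≤ xy`, or symmetrically `e(y)x ≤ xy`: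
this is compatibility when `y` (resp. `x`) is not a magnitude, and an equality when `x = e(x)`.
-/

namespace Assembly

variable {A : Type*} (S : Assembly A)

theorem e_add_e (w : A) : S.add (S.e w) (S.e w) = S.e w :=
  S.e_max w (S.e w) (S.add_e w)

theorem add_eq_self_of_e_eq_add {p a w : A} (h : S.e p = S.add a (S.e w)) :
    S.add p (S.e w) = p := by
  have hp : S.add (S.add p a) (S.e w) = p := by rw [← S.add_assoc, ← h, S.add_e]
  calc S.add p (S.e w) = S.add (S.add (S.add p a) (S.e w)) (S.e w) := by rw [hp]
    _ = S.add (S.add p a) (S.add (S.e w) (S.e w)) := (S.add_assoc _ _ _).symm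
    _ = p := by rw [S.e_add_e, hp]

end Assembly

theorem OrderedAssembly.add_le_of_le_of_add_eq_self {A : Type*} (S : OrderedAssembly A)
    {a b p : A} (ha : S.le a p) (hb : S.add p b = p) : S.le (S.add a b) p :=
  hb ▸ S.add_le_add a p b ha

namespace Solid

variable {A : Type*} (S : Solid A)

theorem le_e_mul_of_e_mul_le {x y : A} (h : S.le (S.mul (S.e x) y) (S.mul x y)) :
    S.le (S.e (S.mul x y)) (S.mul x y) := by
  obtain ⟨w, hw⟩ := S.escala y x
  have hxy : S.e (S.mul x y) = S.add (S.mul (S.e x) y) (S.e w) := by rw [S.e_mul, hw]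
  rw [hxy]
  exact S.add_le_of_le_of_add_eq_self h (S.add_eq_self_of_e_eq_add hxy)

theorem e_mul_le_mul {x y : A} (hx : S.le (S.e x) x) (hy : S.le (S.e y) y) (hy' : y ≠ S.e y) :
    S.le (S.mul (S.e x) y) (S.mul x y) := by
  rw [S.mul_comm _ y, S.mul_comm x y]
  exact S.compat_mul y (S.e x) x hy (Ne.symm hy') hx

end Solid

theorem stmt12 {A : Type*} (S : Solid A) (x y : A)
    (hx : S.le (S.e x) x) (hy : S.le (S.e y) y) :
    S.le (S.e (S.mul x y)) (S.mul x y) := by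
  by_cases hy' : y = S.e y
  · by_cases hx' : x = S.e x
    · refine S.le_e_mul_of_e_mul_le ?_
      rw [← hx']
      exact S.le_refl _
    · rw [S.mul_comm]
      exact S.le_e_mul_of_e_mul_le (S.e_mul_le_mul hy hx hx')
  · exact S.le_e_mul_of_e_mul_le (S.e_mul_le_mul hx hy hy')
end

section
/- In a solid, the set of precise elements (those x with e(x) = 0, where 0 is the minimal magnitude) is closed under addition, negation, multiplication, and (for nonzero elements) inversion, and forms an ordered field. -/
/-!
Every product `e(x)·y` is a magnitude, hence non-negative, and a sum of two non-negative
elements vanishes only if both summands do. Density of the order puts a positive precise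
element below every nonzero magnitude; since multiplication by a positive precise element is
monotone, a nonzero precise `a` annihilates no nonzero magnitude, and precise elements have no
zero divisors. For precise `a ≠ 0` the Leibniz rule `e(ax) = 0·x + e(x)a` then shows that `ax`
precise forces `x` precise; this gives `e(1) = 0`, `e(u(a)) = 0` and `e(a⁻¹) = 0`, and
`u(a) = 1` follows from `a(u(a) - 1) = a - a = 0`.
-/

namespace Solid

variable {A : Type*} (S : Solid A)

theorem zero_add (x : A) : S.add S.zero x = x := by
  rw [S.add_comm]; exact S.add_zero x

theorem e_e (x : A) : S.e (S.e x) = S.e x := by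
  have h_idem : S.add (S.e x) (S.e x) = S.e x := S.e_max x (S.e x) (S.add_e x)
  calc S.e (S.e x) = S.add (S.e (S.e x)) (S.e x) := (S.e_max (S.e x) (S.e x) h_idem).symm
    _ = S.e x := by rw [S.add_comm, S.add_e]

theorem e_zero : S.e S.zero = S.zero := by
  simpa only [S.zero_add] using S.add_e S.zero

theorem zero_le_e (x : A) : S.le S.zero (S.e x) :=
  (S.le_e x S.zero (S.zero_add (S.e x))).1

theorem neg_zero : S.neg S.zero = S.zero := by
  simpa only [S.e_zero, S.zero_add] using S.add_neg S.zero

theorem neg_neg (x : A) : S.neg (S.neg x) = x :=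
  calc S.neg (S.neg x) = S.add (S.neg (S.neg x)) (S.add x (S.neg x)) := by
        rw [S.add_neg, ← S.e_neg, ← S.e_neg, S.add_e]
    _ = S.add x (S.add (S.neg x) (S.neg (S.neg x))) := by
        rw [S.add_comm, ← S.add_assoc]
    _ = x := by rw [S.add_neg, S.e_neg, S.add_e]

theorem neg_eq_zero {a : A} : S.neg a = S.zero ↔ a = S.zero :=
  ⟨fun h => by rw [← S.neg_neg a, h, S.neg_zero], fun h => by rw [h, S.neg_zero]⟩

theorem zero_le_neg_of_le_zero {a : A} (ha : S.e a = S.zero) (h : S.le a S.zero) :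
    S.le S.zero (S.neg a) := by
  simpa only [S.add_neg, ha, S.zero_add] using S.add_le_add a S.zero (S.neg a) h

theorem e_add_eq_zero {a b : A} (ha : S.e a = S.zero) (hb : S.e b = S.zero) :
    S.e (S.add a b) = S.zero := by
  rcases S.e_add a b with h | h <;> rw [h] <;> assumption

theorem add_eq_zero_iff_of_nonneg {m n : A} (hm : S.le S.zero m) (hn : S.le S.zero n) :
    S.add m n = S.zero ↔ m = S.zero ∧ n = S.zero := by
  refine ⟨fun h => ⟨S.le_antisymm _ _ ?_ hm, S.le_antisymm _ _ ?_ hn⟩, ?_⟩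
  · simpa only [S.zero_add, S.add_comm n, h] using S.add_le_add S.zero n m hn
  · simpa only [S.zero_add, h] using S.add_le_add S.zero m n hm
  · rintro ⟨rfl, rfl⟩
    exact S.add_zero S.zero

theorem mul_one (x : A) : S.mul x S.one = x := by
  rw [S.mul_comm]; exact S.one_mul x

theorem mul_neg (x y : A) : S.mul x (S.neg y) = S.neg (S.mul x y) := by
  rw [S.mul_comm x, ← S.neg_mul, S.mul_comm y]

theorem zero_le_e_mul (x y : A) : S.le S.zero (S.mul (S.e x) y) := by
  obtain ⟨z, hz⟩ := S.escala x y
  rw [hz]; exact S.zero_le_e z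

theorem zero_le_zero_mul (y : A) : S.le S.zero (S.mul S.zero y) := by
  simpa only [S.e_zero] using S.zero_le_e_mul S.zero y

theorem mul_le_mul_of_pos {a y z : A} (ha : S.e a = S.zero) (ha0 : S.le S.zero a)
    (hne : a ≠ S.zero) (h : S.le y z) : S.le (S.mul a y) (S.mul a z) :=
  S.compat_mul a y z (ha ▸ ha0) (ha ▸ Ne.symm hne) h

theorem mul_nonneg {a b : A} (ha : S.e a = S.zero) (ha0 : S.le S.zero a)
    (hb0 : S.le S.zero b) : S.le S.zero (S.mul a b) := by
  by_cases hne : a = S.zero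
  · rw [hne]; exact S.zero_le_zero_mul b
  · have h0 : S.le S.zero (S.mul a S.zero) := by
      rw [S.mul_comm]; exact S.zero_le_zero_mul a
    exact S.le_trans _ _ _ h0 (S.mul_le_mul_of_pos ha ha0 hne hb0)

/-- If `a ≠ e(a)` then `a = a·u(a) = (a·a)·a⁻¹`, and `0·a⁻¹` is a magnitude. -/
theorem eq_e_of_mul_self_eq_zero {a : A} (h : S.mul a a = S.zero) : a = S.e a := by
  by_contra hne
  obtain ⟨z, hz⟩ := S.escala S.zero (S.inv a)
  have ha : a = S.e z :=
    calc a = S.mul a (S.mul a (S.inv a)) := by rw [S.mul_inv a hne, S.mul_u a hne]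
      _ = S.e z := by rw [S.mul_assoc, h, ← hz, S.e_zero]
  exact hne (by rw [ha, S.e_e])

theorem exists_pos_le_e {w : A} (hw : S.e w ≠ S.zero) :
    ∃ b, S.e b = S.zero ∧ S.le S.zero b ∧ b ≠ S.zero ∧ S.le b (S.e w) := by
  obtain ⟨z, hz, hz0, -, hzw, -⟩ :=
    S.dense S.zero (S.e w) S.e_zero.symm (S.e_e w).symm (S.zero_le_e w) (Ne.symm hw)
  obtain ⟨b, hbz, hb⟩ := S.decomp z
  have hbne : b ≠ S.zero := by
    rintro rfl; rw [S.zero_add] at hbz; exact hz hbz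
  have hb_le : S.le b z := by
    simpa only [S.zero_add, S.add_comm (S.e z), ← hbz] using
      S.add_le_add S.zero (S.e z) b (S.zero_le_e z)
  have hb0 : S.le S.zero b := by
    refine (S.le_total S.zero b).resolve_right fun hb_neg => hz (S.le_antisymm _ _ ?_ ?_)
    · simpa only [S.zero_add, ← hbz] using S.add_le_add b S.zero (S.e z) hb_neg
    · simpa only [S.zero_add, S.add_e] using S.add_le_add S.zero z (S.e z) hz0
  exact ⟨b, hb, hb0, hbne, S.le_trans _ _ _ hb_le hzw⟩

theorem eq_zero_or_eq_zero_of_mul_eq_zero_of_nonneg {a b : A} (ha : S.e a = S.zero)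
    (hb : S.e b = S.zero) (ha0 : S.le S.zero a) (hb0 : S.le S.zero b)
    (hab : S.mul a b = S.zero) : a = S.zero ∨ b = S.zero := by
  wlog hle : S.le a b generalizing a b
  · exact (this hb ha hb0 ha0 (by rw [S.mul_comm, hab])
      ((S.le_total a b).resolve_left hle)).symm
  by_contra! hne
  have hsq : S.mul a a = S.zero := S.le_antisymm _ _
    (hab ▸ S.mul_le_mul_of_pos ha ha0 hne.1 hle) (S.mul_nonneg ha ha0 ha0)
  exact hne.1 ((S.eq_e_of_mul_self_eq_zero hsq).trans ha)

theorem eq_zero_or_eq_zero_of_mul_eq_zero {a b : A} (ha : S.e a = S.zero)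
    (hb : S.e b = S.zero) (hab : S.mul a b = S.zero) : a = S.zero ∨ b = S.zero := by
  wlog ha0 : S.le S.zero a generalizing a
  · have h := this ((S.e_neg a).trans ha) (by rw [← S.neg_mul, hab, S.neg_zero])
      (S.zero_le_neg_of_le_zero ha ((S.le_total S.zero a).resolve_left ha0))
    rwa [S.neg_eq_zero] at h
  wlog hb0 : S.le S.zero b generalizing b
  · have h := this ((S.e_neg b).trans hb) (by rw [S.mul_neg, hab, S.neg_zero])
      (S.zero_le_neg_of_le_zero hb ((S.le_total S.zero b).resolve_left hb0))
    rwa [S.neg_eq_zero] at h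
  exact S.eq_zero_or_eq_zero_of_mul_eq_zero_of_nonneg ha hb ha0 hb0 hab

theorem e_eq_zero_of_e_mul_eq_zero {w a : A} (ha : S.e a = S.zero) (hne : a ≠ S.zero)
    (h : S.mul (S.e w) a = S.zero) : S.e w = S.zero := by
  wlog ha0 : S.le S.zero a generalizing a
  · exact this ((S.e_neg a).trans ha) (mt S.neg_eq_zero.mp hne)
      (by rw [S.mul_neg, h, S.neg_zero])
      (S.zero_le_neg_of_le_zero ha ((S.le_total S.zero a).resolve_left ha0))
  by_contra hw
  obtain ⟨b, hb, hb0, hbne, hbw⟩ := S.exists_pos_le_e hw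
  have hab : S.mul a b = S.zero := S.le_antisymm _ _
    (by simpa only [S.mul_comm a (S.e w), h] using S.mul_le_mul_of_pos ha ha0 hne hbw)
    (S.mul_nonneg ha ha0 hb0)
  exact (S.eq_zero_or_eq_zero_of_mul_eq_zero_of_nonneg ha hb ha0 hb0 hab).elim hne hbne

theorem exists_e_eq_zero_ne_zero : ∃ b, S.e b = S.zero ∧ b ≠ S.zero := by
  obtain ⟨x, hx, -⟩ := S.exists_neutrix
  obtain ⟨b, hb, -, hbne, -⟩ := S.exists_pos_le_e hx
  exact ⟨b, hb, hbne⟩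

theorem e_one : S.e S.one = S.zero := by
  obtain ⟨b, hb, hbne⟩ := S.exists_e_eq_zero_ne_zero
  have h := S.e_mul S.one b
  rw [S.one_mul, hb, S.mul_one, S.add_zero] at h
  exact S.e_eq_zero_of_e_mul_eq_zero hb hbne h.symm

theorem zero_mul_of_e_eq_zero {c : A} (hc : S.e c = S.zero) : S.mul S.zero c = S.zero := by
  have h := S.e_mul S.one c
  rwa [S.one_mul, hc, S.e_one, S.mul_one, S.add_zero, eq_comm] at h

theorem one_ne_zero : S.one ≠ S.zero := by
  obtain ⟨b, hb, hbne⟩ := S.exists_e_eq_zero_ne_zero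
  intro h
  apply hbne
  rw [← S.one_mul b, h, S.zero_mul_of_e_eq_zero hb]

theorem mul_add_of_e_eq_zero {a x y : A} (ha : S.e a = S.zero) (hx : S.e x = S.zero)
    (hy : S.e y = S.zero) : S.mul a (S.add x y) = S.add (S.mul a x) (S.mul a y) := by
  rw [S.dist, ha, S.zero_mul_of_e_eq_zero hx, S.zero_mul_of_e_eq_zero hy, S.add_zero,
    S.add_zero]

theorem e_mul_eq_zero {a b : A} (ha : S.e a = S.zero) (hb : S.e b = S.zero) :
    S.e (S.mul a b) = S.zero := by
  rw [S.e_mul, ha, hb, S.zero_mul_of_e_eq_zero hb, S.zero_mul_of_e_eq_zero ha, S.add_zero]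

theorem e_eq_zero_of_e_mul_left_eq_zero {a x : A} (ha : S.e a = S.zero) (hne : a ≠ S.zero)
    (h : S.e (S.mul a x) = S.zero) : S.e x = S.zero := by
  rw [S.e_mul, ha] at h
  exact S.e_eq_zero_of_e_mul_eq_zero ha hne
    ((S.add_eq_zero_iff_of_nonneg (S.zero_le_zero_mul x) (S.zero_le_e_mul x a)).mp h).2

theorem u_eq_one {a : A} (ha : S.e a = S.zero) (hne : a ≠ S.zero) : S.u a = S.one := by
  have hnea : a ≠ S.e a := ha ▸ hne
  have hu : S.e (S.u a) = S.zero :=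
    S.e_eq_zero_of_e_mul_left_eq_zero ha hne (by rw [S.mul_u a hnea, ha])
  have hn1 : S.e (S.neg S.one) = S.zero := (S.e_neg S.one).trans S.e_one
  have hdiff : S.mul a (S.add (S.u a) (S.neg S.one)) = S.zero := by
    rw [S.mul_add_of_e_eq_zero ha hu hn1, S.mul_u a hnea, S.mul_neg, S.mul_one, S.add_neg, ha]
  have hdiff0 : S.add (S.u a) (S.neg S.one) = S.zero :=
    (S.eq_zero_or_eq_zero_of_mul_eq_zero ha (S.e_add_eq_zero hu hn1) hdiff).resolve_left hne
  calc S.u a = S.add (S.add (S.u a) (S.neg S.one)) S.one := by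
        rw [← S.add_assoc, S.add_comm (S.neg S.one), S.add_neg, S.e_one, S.add_zero]
    _ = S.one := by rw [hdiff0, S.zero_add]

theorem mul_inv_eq_one {a : A} (ha : S.e a = S.zero) (hne : a ≠ S.zero) :
    S.mul a (S.inv a) = S.one := by
  rw [S.mul_inv a (ha ▸ hne), S.u_eq_one ha hne]

theorem e_inv_eq_zero {a : A} (ha : S.e a = S.zero) (hne : a ≠ S.zero) :
    S.e (S.inv a) = S.zero :=
  S.e_eq_zero_of_e_mul_left_eq_zero ha hne (by rw [S.mul_inv_eq_one ha hne, S.e_one])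

end Solid

/-- The precise elements of a solid are closed under addition, negation,
multiplication and inversion of nonzero elements, and form an ordered field. -/
theorem stmt16 {A : Type*} (S : Solid A) :
    -- closure
    (∀ a b, S.e a = S.zero → S.e b = S.zero → S.e (S.add a b) = S.zero) ∧
    (∀ a, S.e a = S.zero → S.e (S.neg a) = S.zero) ∧
    (∀ a b, S.e a = S.zero → S.e b = S.zero → S.e (S.mul a b) = S.zero) ∧
    (∀ a, S.e a = S.zero → a ≠ S.zero → S.e (S.inv a) = S.zero) ∧
    -- ordered-field structure on the precise elements
    (S.e S.zero = S.zero) ∧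
    (S.e S.one = S.zero) ∧
    (S.one ≠ S.zero) ∧
    (∀ a, S.e a = S.zero → S.add a (S.neg a) = S.zero) ∧
    (∀ a, S.e a = S.zero → a ≠ S.zero → S.mul a (S.inv a) = S.one) ∧
    (∀ a x y, S.e a = S.zero → S.e x = S.zero → S.e y = S.zero →
      S.mul a (S.add x y) = S.add (S.mul a x) (S.mul a y)) ∧
    (∀ a b c, S.e a = S.zero → S.e b = S.zero → S.e c = S.zero →
      S.le a b → S.le (S.add a c) (S.add b c)) ∧
    (∀ a b, S.e a = S.zero → S.e b = S.zero →
      S.le S.zero a → S.le S.zero b → S.le S.zero (S.mul a b)) := by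
  refine ⟨fun a b => S.e_add_eq_zero, fun a ha => (S.e_neg a).trans ha,
    fun a b => S.e_mul_eq_zero, fun a => S.e_inv_eq_zero, S.e_zero, S.e_one, S.one_ne_zero,
    fun a ha => (S.add_neg a).trans ha, fun a => S.mul_inv_eq_one,
    fun a x y => S.mul_add_of_e_eq_zero, fun a b c _ _ _ => S.add_le_add a b c,
    fun a b ha _ ha0 hb0 => S.mul_nonneg ha ha0 hb0⟩
end
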